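/- arXiv:1403.6172 — 2 statements merged into one kernel-verified Lean document; each statement's English description precedes it below -/
import Mathlib

section
/- For every infinite word w over {P,S}: w ↠∞ S^ω if and only if ‖w‖_S = ∞. -/
/-!
Infinitary rewriting for the weakly orthogonal string rewrite system
over the alphabet `{P, S}` with rules `PS → ε` and `SP → ε`.
-/

namespace PS

/-- The two letters of the alphabet. -/
inductive Letter : Type
  | P : Letter
  | S : Letter
  deriving DecidableEq

open Letter

/-- Finite words over `{P, S}`. -/
abbrev Word : Type := List Letter

/-- Infinite words over `{P, S}`. -/
abbrev IWord : Type := ℕ → Letter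

/-- One rewrite step on finite words: delete an adjacent factor `PS` or `SP`. -/
def FStep (w w' : Word) : Prop :=
  ∃ u v : Word, (w = u ++ [P, S] ++ v ∨ w = u ++ [S, P] ++ v) ∧ w' = u ++ v

/-- The value of a letter: `S` counts `+1` and `P` counts `-1`. -/
def lval : Letter → ℤ
  | S => 1
  | P => -1

/-- `sum(w)` for a finite word `w`: number of `S`'s minus number of `P`'s. -/
def fsum (w : Word) : ℤ := (w.map lval).sum

/-- `sum(w, n)`: the number of `S`'s minus the number of `P`'s among the
first `n` letters of the infinite word `w`. -/
def isum (w : IWord) (n : ℕ) : ℤ := ∑ i ∈ Finset.range n, lval (w i)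

/-- A rewrite step at depth `d` on infinite words: the letters at
positions `d`, `d+1` form `PS` or `SP` and are deleted. -/
def IStepAt (d : ℕ) (w w' : IWord) : Prop :=
  ((w d = P ∧ w (d + 1) = S) ∨ (w d = S ∧ w (d + 1) = P)) ∧
    ∀ i, w' i = if i < d then w i else w (i + 2)

/-- `IRed w u` (written `w ↠∞ u`): there is a strongly convergent infinitary
reduction from `w` with limit `u`.  By compression, reductions of length at
most `ω` suffice; such a reduction is a sequence of rewrite steps (with idle
steps allowed, to accommodate finite reductions) whose depths tend to
infinity and whose terms converge to `u`. -/
def IRed (w u : IWord) : Prop :=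
  ∃ (t : ℕ → IWord) (d : ℕ → Option ℕ),
    t 0 = w ∧
    (∀ n, (d n).elim (t (n + 1) = t n) (fun k => IStepAt k (t n) (t (n + 1)))) ∧
    (∀ m : ℕ, ∃ N, ∀ n ≥ N, ∀ k, d n = some k → m ≤ k) ∧
    (∀ m : ℕ, ∃ N, ∀ n ≥ N, ∀ i ≤ m, t n i = u i)

/-- The constant infinite word `S^ω`. -/
def Somega : IWord := fun _ => S

/-- The constant infinite word `P^ω`. -/
def Pomega : IWord := fun _ => P

/-- The `S`-norm `‖w‖_S = sup_n sum(w, n)` (as an extended real). -/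
noncomputable def Snorm (w : IWord) : EReal := ⨆ n : ℕ, ((isum w n : ℝ) : EReal)

/-- The `P`-norm `‖w‖_P = sup_n (− sum(w, n))` (as an extended real). -/
noncomputable def Pnorm (w : IWord) : EReal := ⨆ n : ℕ, ((-(isum w n) : ℝ) : EReal)

/-- An infinite word is a normal form if it admits no rewrite step. -/
def NormalForm (w : IWord) : Prop := ∀ (d : ℕ) (w' : IWord), ¬ IStepAt d w w'

/-- Infinitary conversion: the equivalence generated by `↠∞`. -/
inductive Conv : IWord → IWord → Prop
  | rel {w u : IWord} : IRed w u → Conv w u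
  | refl (w : IWord) : Conv w w
  | symm {w u : IWord} : Conv w u → Conv u w
  | trans {w u v : IWord} : Conv w u → Conv u v → Conv w v

end PS

namespace PS
open Letter

/-- Unboundedness of the partial sums from above. -/
def Unb (v : IWord) : Prop := ∀ M : ℤ, ∃ n : ℕ, M ≤ isum v n

lemma isum_succ (v : IWord) (n : ℕ) : isum v (n + 1) = isum v n + lval (v n) :=
  Finset.sum_range_succ _ _

lemma isum_of_prefixS (v : IWord) (n : ℕ) (h : ∀ i < n, v i = S) :
    isum v n = n := by
  induction n with
  | zero => simp [isum]
  | succ k ih =>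
    rw [isum_succ, ih (fun i hi => h i (by omega)), h k (by omega)]
    simp [lval]

lemma isum_le_self (v : IWord) (n : ℕ) : isum v n ≤ n := by
  induction n with
  | zero => simp [isum]
  | succ k ih =>
    rw [isum_succ]
    have : lval (v k) ≤ 1 := by cases v k <;> simp [lval]
    push_cast; omega

lemma IStepAt.pair_sum {c : ℕ} {v v' : IWord} (h : IStepAt c v v') :
    lval (v c) + lval (v (c + 1)) = 0 := by
  rcases h.1 with ⟨h1, h2⟩ | ⟨h1, h2⟩ <;> rw [h1, h2] <;> simp [lval]

lemma IStepAt.isum_of_le {c : ℕ} {v v' : IWord} (h : IStepAt c v v')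
    {n : ℕ} (hn : n ≤ c) : isum v' n = isum v n := by
  unfold isum
  apply Finset.sum_congr rfl
  intro i hi
  rw [h.2 i, if_pos (by simp at hi; omega)]

lemma IStepAt.isum_of_ge {c : ℕ} {v v' : IWord} (h : IStepAt c v v')
    {n : ℕ} (hn : c ≤ n) : isum v' n = isum v (n + 2) := by
  obtain ⟨k, rfl⟩ := Nat.exists_eq_add_of_le hn
  induction k with
  | zero =>
    simp only [Nat.add_zero]
    rw [h.isum_of_le le_rfl]
    show isum v c = isum v (c + 1 + 1)
    rw [isum_succ, isum_succ]
    have := h.pair_sum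
    omega
  | succ k ih =>
    have h3 : c + (k + 1) = (c + k) + 1 := by ring
    rw [h3, isum_succ, ih (by omega), h.2 (c + k), if_neg (by omega)]
    have h5 : isum v (c + k + 2 + 1) = isum v (c + k + 2) + lval (v (c + k + 2)) :=
      isum_succ v (c + k + 2)
    have h6 : isum v (c + k + 2) = isum v (c + k + 1) + lval (v (c + k + 1)) :=
      isum_succ v (c + k + 1)
    have h7 : c + k + 1 + 2 = c + k + 2 + 1 := by ring
    rw [h7]
    omega

lemma IStepAt.prefix_eq {c : ℕ} {v v' : IWord} (h : IStepAt c v v')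
    {i : ℕ} (hi : i < c) : v' i = v i := by
  rw [h.2 i, if_pos hi]

lemma IStepAt.exists_isum_eq {c : ℕ} {v v' : IWord} (h : IStepAt c v v')
    (n : ℕ) : ∃ n', isum v' n = isum v n' := by
  rcases le_or_gt n c with hn | hn
  · exact ⟨n, h.isum_of_le hn⟩
  · exact ⟨n + 2, h.isum_of_ge hn.le⟩

lemma IStepAt.unb {c : ℕ} {v v' : IWord} (h : IStepAt c v v') (hv : Unb v) :
    Unb v' := by
  intro M
  obtain ⟨n, hn⟩ := hv (max M (isum v (c + 1) + 1))
  rcases le_or_gt n c with h1 | h1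
  · exact ⟨n, by rw [h.isum_of_le h1]; exact le_trans (le_max_left _ _) hn⟩
  · have hne : n ≠ c + 1 := by
      intro he; rw [he] at hn; have := le_trans (le_max_right _ _) hn; omega
    have h2 : c ≤ n - 2 := by omega
    refine ⟨n - 2, ?_⟩
    rw [h.isum_of_ge h2]
    have : n - 2 + 2 = n := by omega
    rw [this]
    exact le_trans (le_max_left _ _) hn

lemma snorm_top_iff_unb (w : IWord) : Snorm w = ⊤ ↔ Unb w := by
  constructor
  · intro h M
    rw [Snorm, iSup_eq_top] at h
    obtain ⟨n, hn⟩ := h ((M : ℝ) : EReal) (EReal.coe_lt_top _)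
    refine ⟨n, ?_⟩
    have : (M : ℝ) < ((isum w n : ℤ) : ℝ) := by exact_mod_cast hn
    exact_mod_cast this.le
  · intro h
    rw [Snorm, iSup_eq_top]
    intro b hb
    obtain ⟨x, hx1, hx2⟩ := EReal.exists_between_coe_real hb
    obtain ⟨n, hn⟩ := h (⌈x⌉ + 1)
    refine ⟨n, lt_trans hx1 ?_⟩
    rw [EReal.coe_lt_coe_iff]
    have : x < ((isum w n : ℤ) : ℝ) := by
      have h1 : x ≤ (⌈x⌉ : ℝ) := Int.le_ceil x
      have h2 : ((⌈x⌉ + 1 : ℤ) : ℝ) ≤ ((isum w n : ℤ) : ℝ) := by exact_mod_cast hn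
      push_cast at h2 ⊢
      linarith
    exact this

lemma unb_of_ired {w : IWord} (h : IRed w Somega) : Unb w := by
  obtain ⟨t, d, h0, hstep, _, hconv⟩ := h
  have key : ∀ N n, ∃ n', isum (t N) n = isum w n' := by
    intro N
    induction N with
    | zero => intro n; exact ⟨n, by rw [h0]⟩
    | succ N ih =>
      intro n
      have hs := hstep N
      cases hd : d N with
      | none =>
        rw [hd] at hs
        simp only [Option.elim] at hs
        rw [hs]; exact ih n
      | some c =>
        rw [hd] at hs
        simp only [Option.elim] at hs
        obtain ⟨n1, hn1⟩ := hs.exists_isum_eq n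
        obtain ⟨n', hn'⟩ := ih n1
        exact ⟨n', by rw [hn1, hn']⟩
  intro M
  set m : ℕ := M.toNat with hm
  obtain ⟨N, hN⟩ := hconv m
  have hpre : ∀ i < m + 1, t N i = S := by
    intro i hi
    exact hN N le_rfl i (by omega)
  have hsum : isum (t N) (m + 1) = (m + 1 : ℕ) := isum_of_prefixS _ _ hpre
  obtain ⟨n', hn'⟩ := key N (m + 1)
  refine ⟨n', ?_⟩
  rw [← hn', hsum]
  have : M ≤ (m : ℤ) := by omega
  push_cast
  omega

/-- A single rewrite step at depth at least `m`. -/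
def Rel (m : ℕ) (a b : IWord) : Prop := ∃ c, m ≤ c ∧ IStepAt c a b

/-- Finitely many rewrite steps, all at depth at least `m`. -/
def MultiStep (m : ℕ) : IWord → IWord → Prop := Relation.ReflTransGen (Rel m)

lemma exists_S_between {v : IWord} {m N : ℕ} (h : (m : ℤ) + 1 ≤ isum v N) :
    ∃ k, m ≤ k ∧ k < N ∧ v k = S := by
  by_contra hc
  push_neg at hc
  have hP : ∀ i, m ≤ i → i < N → v i = P := by
    intro i h1 h2
    cases hv : v i with
    | P => rfl
    | S => exact absurd hv (hc i h1 h2)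
  have hmN : m ≤ N := by
    by_contra hmN
    push_neg at hmN
    have := isum_le_self v N
    omega
  have hdec : ∀ k, m + k ≤ N → isum v (m + k) ≤ isum v m := by
    intro k
    induction k with
    | zero => simp
    | succ j ih =>
      intro hj
      have h1 : isum v (m + (j + 1)) = isum v (m + j) + lval (v (m + j)) := by
        have : m + (j + 1) = (m + j) + 1 := by ring
        rw [this, isum_succ]
      rw [h1, hP (m + j) (by omega) (by omega)]
      have := ih (by omega)
      simp [lval]
      omega
  have h2 := hdec (N - m) (by omega)
  rw [show m + (N - m) = N from by omega] at h2
  have := isum_le_self v m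
  omega

lemma exists_head_S (m : ℕ) :
    ∀ N : ℕ, ∀ v : IWord, (∀ i < m, v i = S) → Unb v → (m : ℤ) + 1 ≤ isum v N →
      ∃ v', MultiStep m v v' ∧ (∀ i < m + 1, v' i = S) ∧ Unb v' := by
  intro N
  induction N using Nat.strong_induction_on with
  | _ N ih =>
    intro v hpre hunb hN
    by_cases hm : v m = S
    · refine ⟨v, Relation.ReflTransGen.refl, ?_, hunb⟩
      intro i hi
      rcases lt_or_eq_of_le (Nat.lt_succ_iff.mp hi) with h | h
      · exact hpre i h
      · rw [h]; exact hm
    · have hmP : v m = P := by cases hv : v m with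
        | P => rfl
        | S => exact absurd hv hm
      obtain ⟨k0, hk0m, hk0N, hk0S⟩ := exists_S_between hN
      have hkex : ∃ k, m ≤ k ∧ v k = S := ⟨k0, hk0m, hk0S⟩
      classical
      set k := Nat.find hkex with hk
      obtain ⟨hkm, hkS⟩ := Nat.find_spec hkex
      rw [← hk] at hkm hkS
      have hkN : k < N := lt_of_le_of_lt (Nat.find_min' hkex ⟨hk0m, hk0S⟩) hk0N
      have hkm1 : m + 1 ≤ k := by
        rcases Nat.lt_or_ge k (m + 1) with h | h
        · exfalso
          have : k = m := by omega
          rw [this] at hkS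
          exact hm hkS
        · exact h
      have hkP : v (k - 1) = P := by
        have hne := Nat.find_min hkex (m := k - 1) (by omega)
        cases hv : v (k - 1) with
        | P => rfl
        | S => exact absurd ⟨by omega, hv⟩ hne
      -- the step at depth k - 1
      set v2 : IWord := fun i => if i < k - 1 then v i else v (i + 2) with hv2
      have hstep : IStepAt (k - 1) v v2 := by
        constructor
        · left
          constructor
          · exact hkP
          · rw [show k - 1 + 1 = k from by omega]; exact hkS
        · intro i; rfl
      have hunb2 : Unb v2 := hstep.unb hunb
      have hpre2 : ∀ i < m, v2 i = S := by
        intro i hi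
        rw [hstep.prefix_eq (by omega)]
        exact hpre i hi
      have hsum2 : (m : ℤ) + 1 ≤ isum v2 (N - 2) := by
        rw [hstep.isum_of_ge (by omega), show N - 2 + 2 = N from by omega]
        exact hN
      obtain ⟨v', hms, hp', hu'⟩ := ih (N - 2) (by omega) v2 hpre2 hunb2 hsum2
      exact ⟨v', Relation.ReflTransGen.head ⟨k - 1, by omega, hstep⟩ hms, hp', hu'⟩

/-- Invariant carried along the stages of the constructed reduction. -/
def Good (m : ℕ) (v : IWord) : Prop := (∀ i < m, v i = S) ∧ Unb v

lemma good_step {m : ℕ} {v : IWord} (h : Good m v) :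
    ∃ v', MultiStep m v v' ∧ Good (m + 1) v' := by
  obtain ⟨hpre, hunb⟩ := h
  obtain ⟨N, hN⟩ := hunb ((m : ℤ) + 1)
  obtain ⟨v', h1, h2, h3⟩ := exists_head_S m N v hpre hunb hN
  exact ⟨v', h1, h2, h3⟩

open Classical in
/-- The sequence of stage words: `gseq w m` starts with `m` letters `S`. -/
noncomputable def gseq (w : IWord) : ℕ → IWord
  | 0 => w
  | m + 1 => if h : Good m (gseq w m) then (good_step h).choose else gseq w m

lemma gseq_spec {w : IWord} (hw : Unb w) :
    ∀ m, Good m (gseq w m) ∧ MultiStep m (gseq w m) (gseq w (m + 1)) := by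
  have key : ∀ m, Good m (gseq w m) := by
    intro m
    induction m with
    | zero => exact ⟨fun i hi => absurd hi (Nat.not_lt_zero i), hw⟩
    | succ k ih =>
      rw [gseq, dif_pos ih]
      exact (good_step ih).choose_spec.2
  intro m
  refine ⟨key m, ?_⟩
  rw [gseq, dif_pos (key m)]
  exact (good_step (key m)).choose_spec.1

/-- Extracting explicit (padded) step sequences from a `MultiStep`. -/
lemma exists_blockdata {m : ℕ} {a b : IWord} (h : MultiStep m a b) :
    ∃ (L : ℕ) (f : ℕ → IWord) (e : ℕ → Option ℕ),
      f 0 = a ∧ (∀ n, L ≤ n → f n = b ∧ e n = none) ∧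
      (∀ n, (e n).elim (f (n + 1) = f n) (fun c => IStepAt c (f n) (f (n + 1)))) ∧
      (∀ n c, e n = some c → m ≤ c) := by
  induction h with
  | refl =>
    exact ⟨0, fun _ => a, fun _ => none, rfl, fun n _ => ⟨rfl, rfl⟩,
      fun n => rfl, fun n c hc => by simp at hc⟩
  | @tail b' b hab hbc ih =>
    obtain ⟨L, f, e, h0, hL, hstep, hdep⟩ := ih
    obtain ⟨c, hc, hstepc⟩ := hbc
    classical
    set f' : ℕ → IWord := fun n => if n ≤ L then f n else b with hf'
    set e' : ℕ → Option ℕ :=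
      fun n => if n = L then some c else if n < L then e n else none with he'
    have hf'def : ∀ n, f' n = if n ≤ L then f n else b := fun n => rfl
    have he'def : ∀ n, e' n = if n = L then some c else if n < L then e n else none :=
      fun n => rfl
    refine ⟨L + 1, f', e', ?_, ?_, ?_, ?_⟩
    · rw [hf'def, if_pos (Nat.zero_le L), h0]
    · intro n hn
      constructor
      · rw [hf'def, if_neg (by omega)]
      · rw [he'def, if_neg (by omega), if_neg (by omega)]
    · intro n
      rcases lt_trichotomy n L with h1 | h1 | h1
      · rw [he'def, if_neg (by omega), if_pos h1, hf'def, hf'def,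
          if_pos h1.le, if_pos (by omega : n + 1 ≤ L)]
        exact hstep n
      · subst h1
        rw [he'def, if_pos rfl]
        simp only [Option.elim]
        rw [hf'def, hf'def, if_pos le_rfl, if_neg (by omega : ¬ n + 1 ≤ n), (hL n le_rfl).1]
        exact hstepc
      · rw [he'def, if_neg (by omega), if_neg (by omega)]
        simp only [Option.elim]
        rw [hf'def, hf'def, if_neg (by omega : ¬ n ≤ L), if_neg (by omega : ¬ n + 1 ≤ L)]
    · intro n c' hc'
      rw [he'def] at hc'
      rcases lt_trichotomy n L with h1 | h1 | h1
      · rw [if_neg (by omega), if_pos h1] at hc'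
        exact hdep n c' hc'
      · subst h1
        rw [if_pos rfl] at hc'
        cases hc'
        exact hc
      · rw [if_neg (by omega), if_neg (by omega)] at hc'
        cases hc'

lemma block_prefix {m : ℕ} {f : ℕ → IWord} {e : ℕ → Option ℕ}
    (hstep : ∀ n, (e n).elim (f (n + 1) = f n) (fun c => IStepAt c (f n) (f (n + 1))))
    (hdep : ∀ n c, e n = some c → m ≤ c) :
    ∀ n i, i < m → f n i = f 0 i := by
  intro n
  induction n with
  | zero => intro i _; rfl
  | succ k ih =>
    intro i hi
    have hs := hstep k
    cases he : e k with
    | none =>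
      rw [he] at hs
      simp only [Option.elim] at hs
      rw [hs]
      exact ih i hi
    | some c =>
      rw [he] at hs
      simp only [Option.elim] at hs
      rw [hs.prefix_eq (lt_of_lt_of_le hi (hdep k c he))]
      exact ih i hi

lemma ired_of_unb {w : IWord} (hw : Unb w) : IRed w Somega := by
  have hg := gseq_spec hw
  set g := gseq w with hgdef
  choose L f e h0 hL hstep hdep using fun m => exists_blockdata (hg m).2
  classical
  set A : ℕ → ℕ := fun m => ∑ i ∈ Finset.range m, (L i + 1) with hA
  have hAdef : ∀ m, A m = ∑ i ∈ Finset.range m, (L i + 1) := fun _ => rfl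
  have hA0 : A 0 = 0 := by rw [hAdef]; simp
  have hAsucc : ∀ m, A (m + 1) = A m + (L m + 1) := by
    intro m; rw [hAdef, hAdef, Finset.sum_range_succ]
  have hAge : ∀ m, m ≤ A m := by
    intro m
    induction m with
    | zero => omega
    | succ k ih => rw [hAsucc]; omega
  have hAmono : ∀ m1 m2, m1 ≤ m2 → A m1 ≤ A m2 := by
    intro m1 m2 h
    rw [hAdef, hAdef]
    exact Finset.sum_le_sum_of_subset (Finset.range_subset_range.mpr h)
  set stage : ℕ → ℕ := fun n => Nat.findGreatest (fun m => A m ≤ n) n with hstagedef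
  have hst1 : ∀ n, A (stage n) ≤ n := by
    intro n
    exact Nat.findGreatest_spec (P := fun m => A m ≤ n) (Nat.zero_le n)
      (by show A 0 ≤ n; omega)
  have hst2 : ∀ n, n < A (stage n + 1) := by
    intro n
    by_contra h
    push_neg at h
    have h1 : stage n + 1 ≤ n := le_trans (hAge _) h
    have h2 : stage n + 1 ≤ stage n := Nat.le_findGreatest h1 h
    omega
  have hstage_eq : ∀ m n, A m ≤ n → n < A (m + 1) → stage n = m := by
    intro m n h1 h2
    have hle : m ≤ stage n := Nat.le_findGreatest (le_trans (hAge m) h1) h1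
    have hge : stage n ≤ m := by
      by_contra h
      push_neg at h
      have := hAmono (m + 1) (stage n) h
      have := hst1 n
      omega
    omega
  have hstage_ge : ∀ M n, A M ≤ n → M ≤ stage n := by
    intro M n hn
    by_contra h
    push_neg at h
    have h1 : stage n + 1 ≤ M := h
    have := hAmono (stage n + 1) M h1
    have := hst2 n
    omega
  refine ⟨fun n => f (stage n) (n - A (stage n)), fun n => e (stage n) (n - A (stage n)),
    ?_, ?_, ?_, ?_⟩
  · -- t 0 = w
    have hs0 : stage 0 = 0 := hstage_eq 0 0 (by omega) (by rw [hAsucc]; omega)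
    simp only [hs0, hA0, Nat.sub_zero]
    rw [h0 0, hgdef, gseq]
  · -- step condition
    intro n
    have h1 : A (stage n) ≤ n := hst1 n
    have h2 : n < A (stage n + 1) := hst2 n
    rw [hAsucc] at h2
    set s := stage n with hs
    set j := n - A s with hj
    rcases lt_or_eq_of_le (by omega : j ≤ L s) with hjL | hjL
    · have hs' : stage (n + 1) = s := by
        apply hstage_eq
        · omega
        · rw [hAsucc]; omega
      have hj2 : n + 1 - A s = j + 1 := by omega
      simp only [hs', hj2]
      exact hstep s j
    · have he : e s j = none := (hL s j (by omega)).2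
      have hs' : stage (n + 1) = s + 1 := by
        apply hstage_eq
        · rw [hAsucc]; omega
        · rw [hAsucc (s + 1)]
          have := hAsucc s
          omega
      have hj2 : n + 1 - A (s + 1) = 0 := by
        have := hAsucc s
        omega
      simp only [hs', hj2, ← hs, ← hj, he, Option.elim]
      rw [h0 (s + 1), (hL s j (by omega)).1]
  · -- depths tend to infinity
    intro M
    refine ⟨A M, ?_⟩
    intro n hn k hk
    have h1 : M ≤ stage n := hstage_ge M n hn
    have h2 : stage n ≤ k := hdep (stage n) (n - A (stage n)) k hk
    omega
  · -- convergence to S^ω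
    intro M
    refine ⟨A (M + 1), ?_⟩
    intro n hn i hi
    have h1 : M + 1 ≤ stage n := hstage_ge (M + 1) n hn
    have h2 : i < stage n := by omega
    show f (stage n) (n - A (stage n)) i = Somega i
    rw [block_prefix (hstep (stage n)) (hdep (stage n)) _ i h2, h0 (stage n)]
    exact ((hg (stage n)).1).1 i h2

theorem ired_Somega_iff_Snorm_top' (w : IWord) :
    IRed w Somega ↔ Snorm w = ⊤ := by
  rw [snorm_top_iff_unb]
  exact ⟨unb_of_ired, ired_of_unb⟩

/-- For every infinite word `w` over `{P, S}`:
`w ↠∞ S^ω` if and only if `‖w‖_S = ∞`. -/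
theorem ired_Somega_iff_Snorm_top (w : IWord) :
    IRed w Somega ↔ Snorm w = ⊤ := by
  rw [snorm_top_iff_unb]
  exact ⟨unb_of_ired, ired_of_unb⟩

end PS
end

section
/- The infinite word ψ = P¹ S² P³ S⁴ P⁵ ⋯ (alternating blocks of P's and S's of strictly increasing lengths 1,2,3,…) satisfies both ψ ↠∞ S^ω and ψ ↠∞ P^ω. Since S^ω and P^ω are distinct normal forms, the weakly orthogonal rewrite system {PS → ε, SP → ε} does not satisfy the infinitary unique normal form property UN∞. -/
namespace PS

open Letter

/-- There is a block index for every position: `i < (b+1)(b+2)/2` for some `b`. -/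
lemma exists_block (i : ℕ) : ∃ b : ℕ, i < (b + 1) * (b + 2) / 2 :=
  ⟨i, by
    have h2 : (i + 1) * 2 ≤ (i + 1) * (i + 2) := Nat.mul_le_mul_left _ (by omega)
    have := (Nat.le_div_iff_mul_le (by norm_num : 0 < 2)).mpr h2
    omega⟩

/-- The (0-based) block number of position `i` in the word
`ψ = P¹ S² P³ S⁴ ⋯`: block `b` occupies positions `b(b+1)/2 ≤ i < (b+1)(b+2)/2`
and has length `b + 1`. -/
def block (i : ℕ) : ℕ := Nat.find (exists_block i)

/-- The oscillating word `ψ = P¹ S² P³ S⁴ P⁵ ⋯`: alternating blocks of `P`'s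
and `S`'s of strictly increasing lengths `1, 2, 3, …`. -/
def psi : IWord := fun i => if block i % 2 = 0 then P else S

lemma block_eq (b i : ℕ) (h1 : b * (b + 1) / 2 ≤ i) (h2 : i < (b + 1) * (b + 2) / 2) :
    block i = b := by
  rw [block, Nat.find_eq_iff]
  refine ⟨h2, fun c hc hlt => ?_⟩
  have hm : (c + 1) * (c + 2) / 2 ≤ b * (b + 1) / 2 :=
    Nat.div_le_div_right (Nat.mul_le_mul (by omega) (by omega))
  omega

lemma psi_eq (b i c d : ℕ) (hc : b * (b + 1) = 2 * c) (hd : (b + 1) * (b + 2) = 2 * d)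
    (h1 : c ≤ i) (h2 : i < d) : psi i = if b % 2 = 0 then P else S := by
  rw [psi, block_eq b i (by omega) (by omega)]

lemma psi_S2 (k i : ℕ) (h1 : 2*(k*k) + 3*k + 1 ≤ i) (h2 : i < 2*(k*k) + 5*k + 3) : psi i = S := by
  rw [psi_eq (2*k+1) i (2*(k*k)+3*k+1) (2*(k*k)+5*k+3) (by ring) (by ring) h1 h2, if_neg (by omega)]

lemma psi_P2 (k i : ℕ) (h1 : 2*(k*k) + 5*k + 3 ≤ i) (h2 : i < 2*(k*k) + 7*k + 6) : psi i = P := by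
  rw [psi_eq (2*k+2) i (2*(k*k)+5*k+3) (2*(k*k)+7*k+6) (by ring) (by ring) h1 h2, if_pos (by omega)]

lemma psi_S3 (k i : ℕ) (h1 : 2*(k*k) + 7*k + 6 ≤ i) (h2 : i < 2*(k*k) + 9*k + 10) : psi i = S := by
  rw [psi_eq (2*k+3) i (2*(k*k)+7*k+6) (2*(k*k)+9*k+10) (by ring) (by ring) h1 h2, if_neg (by omega)]

lemma psi_zero : psi 0 = P := by
  rw [psi_eq 0 0 0 1 (by ring) (by ring) (by omega) (by omega)]; rfl

lemma sqrt_eq (k j : ℕ) (hj : j ≤ 2*k) : Nat.sqrt (k*k+j) = k := by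
  have h1 : k ≤ Nat.sqrt (k*k+j) := Nat.le_sqrt.mpr (by omega)
  have h2 : Nat.sqrt (k*k+j) < k+1 := Nat.sqrt_lt.mpr (by nlinarith)
  omega

/-- Stage `n = k² + j` (with `j ≤ 2k`) of the reduction `ψ ↠∞ S^ω`. -/
def tS : ℕ → IWord := fun n i =>
  if i < Nat.sqrt n then S
  else if i + n < Nat.sqrt n * Nat.sqrt n + 3 * Nat.sqrt n + 1 then P
  else psi (i + 2 * n)

lemma tS_eq (k j : ℕ) (hj : j ≤ 2*k) (i : ℕ) :
    tS (k*k+j) i = if i < k then S else if i + j < 3*k + 1 then P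
      else psi (i + 2*(k*k+j)) := by
  simp only [tS, sqrt_eq k j hj]
  split_ifs <;> first | rfl | (exfalso; omega)

lemma tS_step (k j : ℕ) (hj : j ≤ 2*k) :
    IStepAt (3*k - j) (tS (k*k+j)) (tS (k*k+j+1)) := by
  constructor
  · left
    constructor
    · rw [tS_eq k j hj, if_neg (by omega), if_pos (by omega)]
    · rw [tS_eq k j hj, if_neg (by omega), if_neg (by omega)]
      exact psi_S2 k _ (by omega) (by omega)
  · intro i
    rcases Nat.lt_or_ge j (2*k) with hc | hc
    · have e : k*k+j+1 = k*k+(j+1) := by omega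
      rw [e, tS_eq k (j+1) (by omega), tS_eq k j hj, tS_eq k j hj,
        show i + 2*(k*k+(j+1)) = i + 2 + 2*(k*k+j) from by ring]
      split_ifs <;> first | rfl | (exfalso; omega)
    · have hj' : j = 2*k := by omega
      subst hj'
      have e : k*k+2*k+1 = (k+1)*(k+1)+0 := by ring
      rw [e, tS_eq (k+1) 0 (by omega), tS_eq k (2*k) (by omega), tS_eq k (2*k) (by omega),
        show i + 2*((k+1)*(k+1)+0) = i + 2 + 2*(k*k+2*k) from by ring]
      split_ifs <;>
        first
          | rfl
          | (exfalso; omega)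
          | (rw [psi_S2 k _ (by omega) (by omega)])
          | (rw [psi_P2 k _ (by omega) (by omega)])

lemma sqrt_decomp (n : ℕ) : ∃ k j, j ≤ 2*k ∧ n = k*k + j := by
  refine ⟨Nat.sqrt n, n - Nat.sqrt n * Nat.sqrt n, ?_, ?_⟩
  · have h1 := Nat.sqrt_le n
    have h2 := Nat.lt_succ_sqrt n
    simp only [Nat.succ_eq_add_one] at h2
    have e : (Nat.sqrt n + 1) * (Nat.sqrt n + 1)
        = Nat.sqrt n * Nat.sqrt n + 2 * Nat.sqrt n + 1 := by ring
    omega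
  · have h1 := Nat.sqrt_le n
    omega

lemma red_S : IRed psi Somega := by
  refine ⟨tS, fun n => some (Nat.sqrt n * Nat.sqrt n + 3 * Nat.sqrt n - n), ?_, ?_, ?_, ?_⟩
  · funext i
    have h := tS_eq 0 0 (Nat.le_refl 0) i
    have h0 : tS 0 i = if i < 0 then S else if i + 0 < 3*0+1 then P else psi (i + 2*(0*0+0)) := h
    rw [h0]
    rcases Nat.eq_zero_or_pos i with hi | hi
    · subst hi
      rw [if_neg (by omega), if_pos (by omega), psi_zero]
    · rw [if_neg (by omega), if_neg (by omega)]
      congr 1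
  · intro n
    obtain ⟨k, j, hj, rfl⟩ := sqrt_decomp n
    simp only [Option.elim]
    rw [sqrt_eq k j hj, show k*k + 3*k - (k*k+j) = 3*k - j from by omega]
    exact tS_step k j hj
  · intro m
    refine ⟨m*m, fun n hn k hk => ?_⟩
    have hk' : Nat.sqrt n * Nat.sqrt n + 3 * Nat.sqrt n - n = k := by injection hk
    subst hk' 
    have h1 := Nat.sqrt_le n
    have h2 := Nat.lt_succ_sqrt n
    simp only [Nat.succ_eq_add_one] at h2
    have e : (Nat.sqrt n + 1) * (Nat.sqrt n + 1)
        = Nat.sqrt n * Nat.sqrt n + 2 * Nat.sqrt n + 1 := by ring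
    have h3 : m ≤ Nat.sqrt n := Nat.le_sqrt.mpr (by omega)
    omega
  · intro m
    refine ⟨(m+1)*(m+1), fun n hn i him => ?_⟩
    have h3 : m + 1 ≤ Nat.sqrt n := Nat.le_sqrt.mpr (by omega)
    show tS n i = S
    rw [tS, if_pos (by omega)]

/-- The block index `k` such that `k² + k ≤ n < (k+1)² + (k+1)`. -/
def kP (n : ℕ) : ℕ := (Nat.sqrt (4*n+1) - 1) / 2

lemma kP_eq (k j : ℕ) (hj : j ≤ 2*k+1) : kP (k*k+k+j) = k := by
  have e3 : (2*k+1)*(2*k+1) = 4*(k*k)+4*k+1 := by ring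
  have e4 : (2*k+3)*(2*k+3) = 4*(k*k)+12*k+9 := by ring
  have h1 : 2*k+1 ≤ Nat.sqrt (4*(k*k+k+j)+1) := Nat.le_sqrt.mpr (by omega)
  have h2 : Nat.sqrt (4*(k*k+k+j)+1) < 2*k+3 := Nat.sqrt_lt.mpr (by omega)
  show (Nat.sqrt (4*(k*k+k+j)+1) - 1) / 2 = k
  omega

lemma kP_decomp (n : ℕ) : ∃ k j, j ≤ 2*k+1 ∧ kP n = k ∧ n = k*k+k+j := by
  have h1 := Nat.sqrt_le (4*n+1)
  have h2 := Nat.lt_succ_sqrt (4*n+1)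
  simp only [Nat.succ_eq_add_one] at h2
  have hs1 : 1 ≤ Nat.sqrt (4*n+1) := Nat.le_sqrt.mpr (by omega)
  obtain ⟨k, r, hr, hsk⟩ : ∃ k r, r ≤ 1 ∧ Nat.sqrt (4*n+1) = 2*k+1+r :=
    ⟨(Nat.sqrt (4*n+1) - 1)/2, (Nat.sqrt (4*n+1) - 1) % 2, by omega, by omega⟩
  have e1 : (2*k+1)*(2*k+1) ≤ Nat.sqrt (4*n+1) * Nat.sqrt (4*n+1) :=
    Nat.mul_le_mul (by omega) (by omega)
  have e2 : (Nat.sqrt (4*n+1)+1)*(Nat.sqrt (4*n+1)+1) ≤ (2*k+3)*(2*k+3) :=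
    Nat.mul_le_mul (by omega) (by omega)
  have e3 : (2*k+1)*(2*k+1) = 4*(k*k)+4*k+1 := by ring
  have e4 : (2*k+3)*(2*k+3) = 4*(k*k)+12*k+9 := by ring
  have hk : kP n = k := by show (Nat.sqrt (4*n+1) - 1) / 2 = k; omega
  exact ⟨k, n - (k*k+k), by omega, hk, by omega⟩

/-- Stage `n = k² + k + j` (with `j ≤ 2k+1`) of the reduction `ψ ↠∞ P^ω`. -/
def tP : ℕ → IWord := fun n i =>
  if i < kP n + 1 then P
  else if i + n < kP n * kP n + 4 * kP n + 3 then S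
  else psi (i + 2 * n)

lemma tP_eq (k j : ℕ) (hj : j ≤ 2*k+1) (i : ℕ) :
    tP (k*k+k+j) i = if i < k+1 then P else if i + j < 3*k + 3 then S
      else psi (i + 2*(k*k+k+j)) := by
  simp only [tP, kP_eq k j hj]
  split_ifs <;> first | rfl | (exfalso; omega)

lemma tP_step (k j : ℕ) (hj : j ≤ 2*k+1) :
    IStepAt (3*k+2-j) (tP (k*k+k+j)) (tP (k*k+k+j+1)) := by
  constructor
  · right
    constructor
    · rw [tP_eq k j hj, if_neg (by omega), if_pos (by omega)]
    · rw [tP_eq k j hj, if_neg (by omega), if_neg (by omega)]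
      exact psi_P2 k _ (by omega) (by omega)
  · intro i
    rcases Nat.lt_or_ge j (2*k+1) with hc | hc
    · rw [show k*k+k+j+1 = k*k+k+(j+1) from by omega, tP_eq k (j+1) (by omega),
        tP_eq k j hj, tP_eq k j hj,
        show i + 2*(k*k+k+(j+1)) = i + 2 + 2*(k*k+k+j) from by ring]
      split_ifs <;> first | rfl | (exfalso; omega)
    · have hj' : j = 2*k+1 := by omega
      subst hj'
      rw [show k*k+k+(2*k+1)+1 = (k+1)*(k+1)+(k+1)+0 from by ring,
        tP_eq (k+1) 0 (by omega), tP_eq k (2*k+1) (by omega), tP_eq k (2*k+1) (by omega),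
        show i + 2*((k+1)*(k+1)+(k+1)+0) = i + 2 + 2*(k*k+k+(2*k+1)) from by ring]
      split_ifs <;>
        first
          | rfl
          | (exfalso; omega)
          | (rw [psi_P2 k _ (by omega) (by omega)])
          | (rw [psi_S3 k _ (by omega) (by omega)])

lemma red_P : IRed psi Pomega := by
  refine ⟨tP, fun n => some (kP n * kP n + 4 * kP n + 2 - n), ?_, ?_, ?_, ?_⟩
  · funext i
    have h : tP 0 i = if i < 1 then P else if i + 0 < 3 then S else psi i :=
      tP_eq 0 0 (by omega) i
    rw [h]
    by_cases h1 : i < 1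
    · rw [if_pos h1, show i = 0 from by omega, psi_zero]
    · rw [if_neg h1]
      by_cases h2 : i + 0 < 3
      · rw [if_pos h2, psi_S2 0 i (by omega) (by omega)]
      · rw [if_neg h2]
  · intro n
    obtain ⟨k, j, hj, hk, rfl⟩ := kP_decomp n
    simp only [Option.elim]
    rw [hk, show k*k + 4*k + 2 - (k*k+k+j) = 3*k+2-j from by omega]
    exact tP_step k j hj
  · intro m
    refine ⟨m*m + m, fun n hn q hq => ?_⟩
    obtain ⟨k, j, hj, hk, rfl⟩ := kP_decomp n
    have hq' : kP (k*k+k+j) * kP (k*k+k+j) + 4 * kP (k*k+k+j) + 2 - (k*k+k+j) = q := by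
      injection hq
    rw [hk] at hq'
    have hmk : m ≤ k := by
      by_contra hlt
      push_neg at hlt
      have h4 : (k+1)*(k+1) ≤ m*m := Nat.mul_le_mul (by omega) (by omega)
      have h5 : (k+1)*(k+1) = k*k+2*k+1 := by ring
      omega
    omega
  · intro m
    refine ⟨m*m + m, fun n hn i him => ?_⟩
    obtain ⟨k, j, hj, hk, rfl⟩ := kP_decomp n
    have hmk : m ≤ k := by
      by_contra hlt
      push_neg at hlt
      have h4 : (k+1)*(k+1) ≤ m*m := Nat.mul_le_mul (by omega) (by omega)
      have h5 : (k+1)*(k+1) = k*k+2*k+1 := by ring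
      omega
    show tP (k*k+k+j) i = P
    rw [tP, hk, if_pos (by omega)]

/-- The infinite word `ψ = P¹ S² P³ ⋯` reduces (by strongly
convergent infinitary reductions) both to `S^ω` and to `P^ω`; these are two
distinct normal forms, so the weakly orthogonal rewrite system
`{PS → ε, SP → ε}` does not satisfy the infinitary unique normal form
property `UN∞`. -/
theorem psi_counterexample_UNinf :
    IRed psi Somega ∧ IRed psi Pomega ∧
    Somega ≠ Pomega ∧ NormalForm Somega ∧ NormalForm Pomega ∧
    ¬ (∀ u v : IWord, NormalForm u → NormalForm v → Conv u v → u = v) := by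
  have nS : NormalForm Somega := by
    intro d w' h
    rcases h.1 with ⟨ha, _⟩ | ⟨_, hb⟩
    · exact Letter.noConfusion ha
    · exact Letter.noConfusion hb
  have nP : NormalForm Pomega := by
    intro d w' h
    rcases h.1 with ⟨_, ha⟩ | ⟨hb, _⟩
    · exact Letter.noConfusion ha
    · exact Letter.noConfusion hb
  have hne : Somega ≠ Pomega := fun h => Letter.noConfusion (congrFun h 0)
  exact ⟨red_S, red_P, hne, nS, nP, fun hUN =>
    hne (hUN _ _ nS nP (Conv.trans (Conv.symm (Conv.rel red_S)) (Conv.rel red_P)))⟩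

end PS
end
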